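/- arXiv:2511.13695 — 2 statements merged into one kernel-verified Lean document; each statement's English description precedes it below -/
import Mathlib

section
/- Let x : ℕ → ℝ be a sequence that attains its infimum s (i.e., s = x i₀ for some i₀ and x i ≥ s for all i). Let T₀ > 0 and suppose the series Σ₀ = ∑_{i} exp(−x i / T₀) converges. Then for every T with 0 < T ≤ T₀, the series ∑_{i} exp(−x i / T) converges, and s − T·(s/T₀ + log Σ₀) ≤ −T·log(∑_{i} exp(−x i / T)) ≤ s. -/
/-!
Since `x i - s ≥ 0`, lowering the temperature from `T₀` to `T` multiplies each weight
`exp (-x i / T₀)` by at most `exp (s / T₀ - s / T)`; this gives summability and, after taking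
logarithms, the lower bound. The upper bound holds because the sum dominates its term
`exp (-s / T)`.
-/

open Real

noncomputable def softmin {ι : Type*} (T : ℝ) (x : ι → ℝ) : ℝ :=
  -T * log (∑' i, exp (-x i / T))

section Softmin

variable {ι : Type*} {x : ι → ℝ} {s T T₀ : ℝ}

lemma exp_neg_div_le_exp_mul_exp_neg_div {a : ℝ} (hs : s ≤ a) (hT : 0 < T) (hTT₀ : T ≤ T₀) :
    exp (-a / T) ≤ exp (s / T₀ - s / T) * exp (-a / T₀) := by
  rw [← exp_add, exp_le_exp]
  have h := div_le_div_of_nonneg_left (sub_nonneg.2 hs) hT hTT₀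
  rw [sub_div, sub_div] at h
  rw [neg_div, neg_div]
  linarith

lemma summable_exp_neg_div_of_le (hmin : ∀ i, s ≤ x i) (hT : 0 < T) (hTT₀ : T ≤ T₀)
    (hsum : Summable fun i => exp (-x i / T₀)) : Summable fun i => exp (-x i / T) :=
  (hsum.mul_left _).of_nonneg_of_le (fun _ => (exp_pos _).le)
    fun i => exp_neg_div_le_exp_mul_exp_neg_div (hmin i) hT hTT₀

lemma tsum_exp_neg_div_pos [Nonempty ι] (hsum : Summable fun i => exp (-x i / T)) :
    0 < ∑' i, exp (-x i / T) :=
  hsum.tsum_pos (fun _ => (exp_pos _).le) (Classical.arbitrary ι) (exp_pos _)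

lemma log_tsum_exp_neg_div_le [Nonempty ι] (hmin : ∀ i, s ≤ x i) (hT : 0 < T) (hTT₀ : T ≤ T₀)
    (hsum : Summable fun i => exp (-x i / T₀)) :
    log (∑' i, exp (-x i / T)) ≤ s / T₀ - s / T + log (∑' i, exp (-x i / T₀)) := by
  have hsumT := summable_exp_neg_div_of_le hmin hT hTT₀ hsum
  calc log (∑' i, exp (-x i / T))
      ≤ log (exp (s / T₀ - s / T) * ∑' i, exp (-x i / T₀)) := by
        refine log_le_log (tsum_exp_neg_div_pos hsumT) ?_
        rw [← tsum_mul_left]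
        exact hsumT.tsum_le_tsum (fun i => exp_neg_div_le_exp_mul_exp_neg_div (hmin i) hT hTT₀)
          (hsum.mul_left _)
    _ = s / T₀ - s / T + log (∑' i, exp (-x i / T₀)) := by
        rw [log_mul (exp_ne_zero _) (tsum_exp_neg_div_pos hsum).ne', log_exp]

lemma sub_le_softmin [Nonempty ι] (hmin : ∀ i, s ≤ x i) (hT : 0 < T) (hTT₀ : T ≤ T₀)
    (hsum : Summable fun i => exp (-x i / T₀)) :
    s - T * (s / T₀ + log (∑' i, exp (-x i / T₀))) ≤ softmin T x := by
  have hlog := mul_le_mul_of_nonneg_left (log_tsum_exp_neg_div_le hmin hT hTT₀ hsum) hT.le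
  have hTs : T * (s / T) = s := mul_div_cancel₀ s hT.ne'
  unfold softmin
  linarith

lemma softmin_le (hT : 0 < T) (hsum : Summable fun i => exp (-x i / T)) (j : ι) :
    softmin T x ≤ x j := by
  have : Nonempty ι := ⟨j⟩
  have hlog : -x j / T ≤ log (∑' i, exp (-x i / T)) :=
    (le_log_iff_exp_le (tsum_exp_neg_div_pos hsum)).2
      (hsum.le_tsum j fun i _ => (exp_pos _).le)
  rw [div_le_iff₀ hT] at hlog
  unfold softmin
  linarith

end Softmin

theorem softmin_bounds_of_summable_general (x : ℕ → ℝ) (s : ℝ) (i₀ : ℕ) (h₀ : s = x i₀)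
    (hmin : ∀ i, s ≤ x i) (T₀ : ℝ)
    (hsum : Summable fun i => Real.exp (-x i / T₀)) :
    ∀ T : ℝ, 0 < T → T ≤ T₀ →
      Summable (fun i => Real.exp (-x i / T)) ∧
      s - T * (s / T₀ + Real.log (∑' i, Real.exp (-x i / T₀))) ≤
        -T * Real.log (∑' i, Real.exp (-x i / T)) ∧
      -T * Real.log (∑' i, Real.exp (-x i / T)) ≤ s := by
  intro T hT hTT₀
  have hsumT := summable_exp_neg_div_of_le hmin hT hTT₀ hsum
  refine ⟨hsumT, sub_le_softmin hmin hT hTT₀ hsum, ?_⟩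
  rw [h₀]
  exact softmin_le hT hsumT i₀

/-- **Softmin two-sided estimate (countable case).**
Let `x : ℕ → ℝ` attain its infimum `s`, let `T₀ > 0` and suppose the series
`Σ₀ = ∑ i, exp (-x i / T₀)` converges.  Then for every `0 < T ≤ T₀` the series
`∑ i, exp (-x i / T)` converges and the softmin `-T * log (∑ i, exp (-x i / T))`
satisfies `s - T * (s / T₀ + log Σ₀) ≤ softmin ≤ s`. -/
theorem softmin_bounds_of_summable (x : ℕ → ℝ) (s : ℝ) (i₀ : ℕ) (h₀ : s = x i₀)
    (hmin : ∀ i, s ≤ x i) (T₀ : ℝ) (hT₀ : 0 < T₀)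
    (hsum : Summable fun i => Real.exp (-x i / T₀)) :
    ∀ T : ℝ, 0 < T → T ≤ T₀ →
      Summable (fun i => Real.exp (-x i / T)) ∧
      s - T * (s / T₀ + Real.log (∑' i, Real.exp (-x i / T₀))) ≤
        -T * Real.log (∑' i, Real.exp (-x i / T)) ∧
      -T * Real.log (∑' i, Real.exp (-x i / T)) ≤ s :=
  softmin_bounds_of_summable_general x s i₀ h₀ hmin T₀ hsum
end

section
/- Let g, n ∈ ℕ with 2g − 2 + n > 0 and let G be a stable graph of type (g, n), with vertex set V and edge set E. Then #V ≤ 2g − 2 + n and #E ≤ 3g − 3 + n. -/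
/-- A **stable graph of type `(g, n)`**: a finite set `H` of half-edges with an involution `ι`,
a finite set `V` of vertices with an attachment map `a : H → V`, a genus function
`gV : V → ℕ`, and a bijection between the fixed points of `ι` (the legs) and `{1, …, n}`;
subject to connectedness, the genus relation `g = ∑ᵥ gV v + #E − #V + 1`
(stated additively to avoid truncated subtraction), and the stability condition
`2·gV v − 2 + deg v > 0` at every vertex. -/
structure StableGraph (g n : ℕ) where
  /-- half-edges -/
  H : Type
  /-- vertices -/
  V : Type
  [fintypeH : Fintype H]
  [fintypeV : Fintype V]
  [decEqH : DecidableEq H]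
  [decEqV : DecidableEq V]
  /-- the involution on half-edges -/
  ι : H → H
  ι_invol : ∀ h, ι (ι h) = h
  /-- attachment of half-edges to vertices -/
  a : H → V
  /-- the genus function -/
  gV : V → ℕ
  /-- the legs (fixed half-edges) are in bijection with the `n` marked points -/
  legEquiv : { h : H // ι h = h } ≃ Fin n
  /-- the underlying graph is connected -/
  connected :
    (SimpleGraph.fromRel fun v w => ∃ h, ι h ≠ h ∧ a h = v ∧ a (ι h) = w).Connected
  /-- the genus relation `g = ∑ᵥ gV v + #E − #V + 1` -/
  genus_rel : g + Fintype.card V =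
    (∑ v, gV v) + ((Finset.univ.filter fun h => ι h ≠ h).image fun h => s(h, ι h)).card + 1
  /-- stability: `2·gV v − 2 + deg v > 0` for every vertex -/
  stability : ∀ v, 2 < 2 * gV v + (Finset.univ.filter fun h => a h = v).card

attribute [instance] StableGraph.fintypeH StableGraph.fintypeV
  StableGraph.decEqH StableGraph.decEqV

variable {g n : ℕ}

/-- The degree (valence) of a vertex: the number of half-edges attached to it. -/
def StableGraph.deg (G : StableGraph g n) (v : G.V) : ℕ :=
  (Finset.univ.filter fun h => G.a h = v).card

/-- The number of edges of a stable graph: the number of unordered pairs `{h, ι h}`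
with `ι h ≠ h`. -/
def StableGraph.edgeCount (G : StableGraph g n) : ℕ :=
  ((Finset.univ.filter fun h => G.ι h ≠ h).image fun h => s(h, G.ι h)).card

/-- **Combinatorial bounds for stable graphs.**
A stable graph of type `(g,n)` (with `2g − 2 + n > 0`) has at most `2g − 2 + n` vertices and
at most `3g − 3 + n` edges.  These uniform bounds on the combinatorial complexity of boundary
strata of the Deligne–Mumford compactification of `M_{g,n}` underlie the finiteness of the
generating sets of strata in the paper's stability results. -/
theorem stableGraph_card_bounds (g n : ℕ) (hgn : 2 < 2 * g + n) (G : StableGraph g n) :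
    (Fintype.card G.V : ℤ) ≤ 2 * (g : ℤ) - 2 + n ∧
    (G.edgeCount : ℤ) ≤ 3 * (g : ℤ) - 3 + n := by
  classical
  set S : Finset G.H := Finset.univ.filter fun h => G.ι h ≠ h with hSdef
  -- each fiber of h ↦ s(h, ι h) on S has exactly two elements
  have hfiber : ∀ e ∈ S.image (fun h => s(h, G.ι h)),
      (S.filter fun h => s(h, G.ι h) = e).card = 2 := by
    intro e he
    obtain ⟨h₀, hh₀, rfl⟩ := Finset.mem_image.mp he
    have hne : G.ι h₀ ≠ h₀ := (Finset.mem_filter.mp hh₀).2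
    have hset : (S.filter fun h => s(h, G.ι h) = s(h₀, G.ι h₀)) = {h₀, G.ι h₀} := by
      ext h
      simp only [hSdef, Finset.mem_filter, Finset.mem_insert, Finset.mem_singleton,
        Finset.mem_univ, true_and]
      constructor
      · rintro ⟨-, heq⟩
        rcases Sym2.eq_iff.mp heq with ⟨h1, -⟩ | ⟨h1, -⟩
        · exact Or.inl h1
        · exact Or.inr h1
      · rintro (rfl | rfl)
        · exact ⟨hne, rfl⟩
        · refine ⟨fun hc => ?_, ?_⟩
          · rw [G.ι_invol] at hc; exact hne hc.symm
          · rw [G.ι_invol]; exact Sym2.eq_swap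
    rw [hset, Finset.card_pair (Ne.symm hne)]
  -- hence #S = 2 * edgeCount
  have hScard : S.card = 2 * G.edgeCount := by
    rw [Finset.card_eq_sum_card_image (fun h => s(h, G.ι h)) S,
      Finset.sum_congr rfl hfiber, Finset.sum_const, smul_eq_mul, mul_comm]
    rfl
  -- the legs count is n
  have hlegs : (Finset.univ.filter fun h => G.ι h = h).card = n := by
    rw [← Fintype.card_subtype]
    rw [Fintype.card_congr G.legEquiv, Fintype.card_fin]
  -- total: card H = n + 2 * edgeCount
  have hH : Fintype.card G.H = n + 2 * G.edgeCount := by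
    have := Finset.card_filter_add_card_filter_not
      (s := (Finset.univ : Finset G.H)) (p := fun h => G.ι h = h)
    rw [Finset.card_univ] at this
    rw [← this, hlegs, ← hScard, hSdef]
  -- degrees sum to card H
  have hdeg : ∑ v, G.deg v = Fintype.card G.H := by
    rw [← Finset.card_univ,
      Finset.card_eq_sum_card_fiberwise (f := G.a) (t := Finset.univ)
        (fun x _ => Finset.mem_univ _)]
    rfl
  -- stability summed
  have hstab : 3 * Fintype.card G.V ≤ 2 * (∑ v, G.gV v) + ∑ v, G.deg v := by
    calc 3 * Fintype.card G.V = ∑ _v : G.V, 3 := by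
          rw [Finset.sum_const, smul_eq_mul, Finset.card_univ, mul_comm]
      _ ≤ ∑ v, (2 * G.gV v + G.deg v) := by
          refine Finset.sum_le_sum fun v _ => ?_
          exact G.stability v
      _ = 2 * (∑ v, G.gV v) + ∑ v, G.deg v := by
          rw [Finset.sum_add_distrib, Finset.mul_sum]
  have hgen : g + Fintype.card G.V = (∑ v, G.gV v) + G.edgeCount + 1 := G.genus_rel
  rw [hH] at hdeg
  constructor <;> omega
end
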